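/- SPTL satisfaction only depends on the pomset above the terminated events: for a pomset P, a concstate (T, U) of P, and any SPTL formula φ, P, (T, U) ⊨ φ if and only if (P \ T), (∅, U) ⊨ φ, where P \ T is the pomset obtained by deleting the events of T, with starting interface U. -/
import Mathlib


/-- Syntax of Sparse Pomset Temporal Logic: atoms are conclists (here, the set of
currently active events), with negation, conjunction, next and until. -/
inductive SPTL (E : Type*) : Type _
  | atom (V : Set E)
  | neg (φ : SPTL E)
  | and (φ ψ : SPTL E)
  | next (φ : SPTL E)
  | untl (φ ψ : SPTL E)

/-- The set of all terminable events of the concstate `(T, U)` of the pomset with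
carrier `C`, precedence `lt` and terminating interface `TP`. -/
def termSet {E : Type*} (C : Set E) (lt : E → E → Prop) (TP T U : Set E) : Set E :=
  {x | x ∈ U ∧ x ∉ TP ∧ ∀ y ∈ C, (¬ lt x y ∧ ¬ lt y x) → y ∈ U ∪ T}

/-- The set of all startable events of the concstate `(T, U)`. -/
def startSet {E : Type*} (C : Set E) (lt : E → E → Prop) (T U : Set E) : Set E :=
  {x | x ∈ C ∧ x ∉ U ∧ x ∉ T ∧ ∀ y ∈ C, lt y x → y ∈ T}

/-- One application of the 'next' modality to a state predicate `p`: either some event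
can be terminated and we terminate all terminable events, or some event can be started
and we start all startable events. -/
def nextStep {E : Type*} (C : Set E) (lt : E → E → Prop) (TP : Set E)
    (p : Set E → Set E → Prop) (T U : Set E) : Prop :=
  ((termSet C lt TP T U).Nonempty ∧
      p (T ∪ termSet C lt TP T U) (U \ termSet C lt TP T U)) ∨
  ((startSet C lt T U).Nonempty ∧ p T (U ∪ startSet C lt T U))

/-- `i`-fold iteration of the 'next' modality. -/
def nextIter {E : Type*} (C : Set E) (lt : E → E → Prop) (TP : Set E)
    (p : Set E → Set E → Prop) : ℕ → Set E → Set E → Prop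
  | 0 => p
  | i + 1 => nextStep C lt TP (nextIter C lt TP p i)

/-- Concstate semantics of SPTL over the pomset with carrier `C`, precedence `lt` and
terminating interface `TP`: `Sat C lt TP φ T U` is `P, (T, U) ⊨ φ`. -/
def Sat {E : Type*} (C : Set E) (lt : E → E → Prop) (TP : Set E) :
    SPTL E → Set E → Set E → Prop
  | .atom V, _, U => U = V
  | .neg φ, T, U => ¬ Sat C lt TP φ T U
  | .and φ ψ, T, U => Sat C lt TP φ T U ∧ Sat C lt TP ψ T U
  | .next φ, T, U => nextStep C lt TP (Sat C lt TP φ) T U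
  | .untl φ ψ, T, U => ∃ i : ℕ, nextIter C lt TP (Sat C lt TP ψ) i T U ∧
      ∀ j < i, nextIter C lt TP (Sat C lt TP φ) j T U

lemma termSet_del {E : Type*} (C : Set E) (lt : E → E → Prop) (TP D T U : Set E)
    (hD : D ⊆ T) (hUD : U ∩ D = ∅) :
    termSet (C \ D) lt TP (T \ D) U = termSet C lt TP T U := by
  ext x
  simp only [termSet, Set.mem_setOf_eq, Set.mem_diff, Set.mem_union]
  constructor
  · rintro ⟨hxU, hxTP, h⟩
    refine ⟨hxU, hxTP, fun y hyC hinc => ?_⟩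
    by_cases hyD : y ∈ D
    · exact Or.inr (hD hyD)
    · rcases h y ⟨hyC, hyD⟩ hinc with h' | ⟨h', _⟩
      · exact Or.inl h'
      · exact Or.inr h'
  · rintro ⟨hxU, hxTP, h⟩
    refine ⟨hxU, hxTP, fun y hy hinc => ?_⟩
    rcases h y hy.1 hinc with h' | h'
    · exact Or.inl h'
    · exact Or.inr ⟨h', hy.2⟩

lemma startSet_del {E : Type*} (C : Set E) (lt : E → E → Prop) (D T U : Set E)
    (hD : D ⊆ T) :
    startSet (C \ D) lt (T \ D) U = startSet C lt T U := by
  ext x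
  simp only [startSet, Set.mem_setOf_eq, Set.mem_diff]
  constructor
  · rintro ⟨⟨hxC, hxD⟩, hxU, hxT, h⟩
    refine ⟨hxC, hxU, fun hxT' => hxT ⟨hxT', hxD⟩, fun y hyC hlt => ?_⟩
    by_cases hyD : y ∈ D
    · exact hD hyD
    · exact (h y ⟨hyC, hyD⟩ hlt).1
  · rintro ⟨hxC, hxU, hxT, h⟩
    exact ⟨⟨hxC, fun hxD => hxT (hD hxD)⟩, hxU, fun h' => hxT h'.1,
      fun y hy hlt => ⟨h y hy.1 hlt, hy.2⟩⟩

lemma nextStep_del {E : Type*} (C : Set E) (lt : E → E → Prop) (TP D : Set E)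
    (p q : Set E → Set E → Prop)
    (hpq : ∀ T U, D ⊆ T → U ∩ D = ∅ → (p T U ↔ q (T \ D) U)) :
    ∀ T U, D ⊆ T → U ∩ D = ∅ →
      (nextStep C lt TP p T U ↔ nextStep (C \ D) lt TP q (T \ D) U) := by
  intro T U hD hUD
  have ht := termSet_del C lt TP D T U hD hUD
  have hs := startSet_del C lt D T U hD
  unfold nextStep
  rw [ht, hs]
  have hXD : termSet C lt TP T U ∩ D = ∅ := by
    apply Set.eq_empty_of_subset_empty
    rw [← hUD]
    intro x hx
    exact ⟨hx.1.1, hx.2⟩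
  have key1 : (T ∪ termSet C lt TP T U) \ D = (T \ D) ∪ termSet C lt TP T U := by
    rw [Set.union_diff_distrib]
    congr 1
    exact (Set.disjoint_iff_inter_eq_empty.mpr hXD).sdiff_eq_left
  have h1 := hpq (T ∪ termSet C lt TP T U) (U \ termSet C lt TP T U)
    (hD.trans Set.subset_union_left)
    (by apply Set.eq_empty_of_subset_empty; rw [← hUD]; intro x hx; exact ⟨hx.1.1, hx.2⟩)
  rw [key1] at h1
  have h2 := hpq T (U ∪ startSet C lt T U) hD (by
    apply Set.eq_empty_of_subset_empty
    intro x hx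
    rcases hx.1 with h | h
    · rw [← hUD]; exact ⟨h, hx.2⟩
    · exact absurd (hD hx.2) h.2.2.1)
  rw [h1, h2]

lemma nextIter_del {E : Type*} (C : Set E) (lt : E → E → Prop) (TP D : Set E)
    (p q : Set E → Set E → Prop)
    (hpq : ∀ T U, D ⊆ T → U ∩ D = ∅ → (p T U ↔ q (T \ D) U)) :
    ∀ i (T U : Set E), D ⊆ T → U ∩ D = ∅ →
      (nextIter C lt TP p i T U ↔ nextIter (C \ D) lt TP q i (T \ D) U) := by
  intro i
  induction i with
  | zero => exact hpq
  | succ n ih => exact nextStep_del C lt TP D _ _ ih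

lemma sat_del {E : Type*} (C : Set E) (lt : E → E → Prop) (TP D : Set E)
    (φ : SPTL E) :
    ∀ T U, D ⊆ T → U ∩ D = ∅ →
      (Sat C lt TP φ T U ↔ Sat (C \ D) lt TP φ (T \ D) U) := by
  induction φ with
  | atom V => intro T U _ _; rfl
  | neg φ ih => intro T U hD hUD; exact not_congr (ih T U hD hUD)
  | and φ ψ ih1 ih2 => intro T U hD hUD; exact and_congr (ih1 T U hD hUD) (ih2 T U hD hUD)
  | next φ ih => exact nextStep_del C lt TP D _ _ ih
  | untl φ ψ ih1 ih2 =>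
    intro T U hD hUD
    simp only [Sat]
    constructor
    · rintro ⟨i, h1, h2⟩
      exact ⟨i, (nextIter_del C lt TP D _ _ ih2 i T U hD hUD).1 h1,
        fun j hj => (nextIter_del C lt TP D _ _ ih1 j T U hD hUD).1 (h2 j hj)⟩
    · rintro ⟨i, h1, h2⟩
      exact ⟨i, (nextIter_del C lt TP D _ _ ih2 i T U hD hUD).2 h1,
        fun j hj => (nextIter_del C lt TP D _ _ ih1 j T U hD hUD).2 (h2 j hj)⟩

/-- SPTL satisfaction only depends on the pomset above the terminated events: for a
concstate `(T, U)` of `P` and any SPTL formula `φ`, `P, (T, U) ⊨ φ` iff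
`P \ T, (∅, U) ⊨ φ`, where `P \ T` is the pomset obtained by deleting the events of `T`,
with starting interface `U`. -/
theorem stmt15 {E : Type*} (C : Set E) (lt : E → E → Prop) (TP T U : Set E)
    (hTC : T ⊆ C) (hUC : U ⊆ C) (hTPC : TP ⊆ C)
    (hTTP : T ∩ TP = ∅)
    (hUT : U ∩ T = ∅)
    (hanti : ∀ x ∈ U, ∀ y ∈ U, ¬ lt x y)
    (hTdc : ∀ x y, x ∈ C → y ∈ C → lt x y → y ∈ T → x ∈ T)
    (huc : ∀ x y, x ∈ C → y ∈ C → lt x y → x ∉ T ∪ U → y ∉ T ∪ U) :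
    ∀ φ : SPTL E, Sat C lt TP φ T U ↔ Sat (C \ T) lt TP φ ∅ U := by
  intro φ
  have := sat_del C lt TP T φ T U subset_rfl hUT
  rwa [Set.diff_self] at this
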